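/- Let X be a bipartite mixed graph with a unique perfect matching, with n vertices. Then det(H_α) = (−1)^{n/2}, where H_α is the α-hermitian adjacency matrix of X. -/

import Mathlib

open SimpleGraph
open scoped Classical

noncomputable section

variable {V : Type*}

structure MixedGraph (V : Type*) where
  digon : V → V → Prop
  arc : V → V → Prop
  digon_symm : ∀ u v, digon u v → digon v u
  digon_irrefl : ∀ v, ¬ digon v v
  arc_irrefl : ∀ v, ¬ arc v v
  arc_asymm : ∀ u v, arc u v → ¬ arc v u
  digon_arc : ∀ u v, digon u v → ¬ arc u v ∧ ¬ arc v u

def MixedGraph.underlying (X : MixedGraph V) : SimpleGraph V where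
  Adj u v := X.digon u v ∨ X.arc u v ∨ X.arc v u
  symm := by
    refine ⟨?_⟩
    intro u v h
    rcases h with h | h | h
    · exact Or.inl (X.digon_symm u v h)
    · exact Or.inr (Or.inr h)
    · exact Or.inr (Or.inl h)
  loopless := by
    refine ⟨?_⟩
    intro v h
    rcases h with h | h | h
    · exact X.digon_irrefl v h
    · exact X.arc_irrefl v h
    · exact X.arc_irrefl v h

/-- The α-hermitian adjacency matrix of a mixed graph. -/
def Halpha (X : MixedGraph V) (α : ℂ) : Matrix V V ℂ := fun u v =>
  if X.digon u v then 1
  else if X.arc u v then α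
  else if X.arc v u then (starRingEnd ℂ) α
  else 0

/-- The value h_α of a walk: product of matrix entries along consecutive vertices. -/
def hWalk (X : MixedGraph V) (α : ℂ) {u v : V} (p : X.underlying.Walk u v) : ℂ :=
  (p.darts.map (fun d => Halpha X α d.toProd.1 d.toProd.2)).prod

/-- A co-augmenting path w.r.t. a matching edge set `M`: a path whose edges alternate
matching / non-matching, beginning and ending with matching edges. -/
def IsCoAugmenting (G : SimpleGraph V) (M : Set (Sym2 V)) {u v : V} (p : G.Walk u v) : Prop :=
  p.IsPath ∧ Odd p.edges.length ∧
    ∀ i : Fin p.edges.length, (p.edges.get i ∈ M ↔ Even i.val)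

/-- `G` is unicyclic: connected with exactly one cycle (all cycles have the same edge set). -/
def IsUnicyclic (G : SimpleGraph V) : Prop :=
  G.Connected ∧ (∃ (u : V) (c : G.Walk u u), c.IsCycle) ∧
    ∀ (u v : V) (c : G.Walk u u) (d : G.Walk v v), c.IsCycle → d.IsCycle →
      {e | e ∈ c.edges} = {e | e ∈ d.edges}

/-- A peg: a matching edge incident to a vertex of the cycle `c` but not an edge of `c`. -/
def IsPeg (G : SimpleGraph V) (M : G.Subgraph) {u : V} (c : G.Walk u u) (e : Sym2 V) : Prop :=
  e ∈ M.edgeSet ∧ e ∉ c.edges ∧ ∃ x ∈ c.support, x ∈ e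

/-- Restriction of a matching to an induced subgraph. -/
def restrictMatching (G : SimpleGraph V) (M : G.Subgraph) (s : Set V) :
    (G.induce s).Subgraph where
  verts := Set.univ
  Adj a b := M.Adj a.1 b.1
  adj_sub h := M.adj_sub h
  edge_vert _ := Set.mem_univ _
  symm := ⟨fun _ _ h => M.adj_symm h⟩

/-- The sign `f_W` at the end of a walk: starts at 1 and flips across non-matching edges. -/
def fEnd (G : SimpleGraph V) (M : Set (Sym2 V)) : ∀ {u v : V}, G.Walk u v → ℤ
  | _, _, SimpleGraph.Walk.nil => 1
  | _, _, @SimpleGraph.Walk.cons _ _ u w _ _ p =>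
      if s(u, w) ∈ M then fEnd G M p else - fEnd G M p

end


/-! In the Leibniz expansion of `det H_α` a permutation `σ` contributes only if every `σ v` is
adjacent to `v`. In a bipartite graph such a `σ` gives a perfect matching, pairing each vertex of
one colour class with its image; by uniqueness that matching is `M`, whichever colour class is
used, so `σ` is the involution exchanging the ends of the edges of `M`. Its sign is `(-1)^(n/2)`,
and its term is a product over the edges `uv` of `M` of `H_α(u,v) H_α(v,u) = 1`. -/

namespace SimpleGraph

variable {G : SimpleGraph V} {M : G.Subgraph}

namespace Subgraph

noncomputable def IsPerfectMatching.partner (hM : M.IsPerfectMatching) (v : V) : V :=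
  (isPerfectMatching_iff.mp hM v).exists.choose

lemma IsPerfectMatching.adj_partner (hM : M.IsPerfectMatching) (v : V) :
    M.Adj v (hM.partner v) :=
  (isPerfectMatching_iff.mp hM v).exists.choose_spec

lemma IsPerfectMatching.partner_eq_of_adj (hM : M.IsPerfectMatching) {v w : V}
    (h : M.Adj v w) : hM.partner v = w :=
  (isPerfectMatching_iff.mp hM v).unique (hM.adj_partner v) h

lemma IsPerfectMatching.partner_involutive (hM : M.IsPerfectMatching) :
    Function.Involutive hM.partner :=
  fun v => hM.partner_eq_of_adj (hM.adj_partner v).symm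

lemma IsPerfectMatching.partner_ne (hM : M.IsPerfectMatching) (v : V) : hM.partner v ≠ v :=
  (hM.adj_partner v).ne.symm

noncomputable def IsPerfectMatching.toPerm (hM : M.IsPerfectMatching) : Equiv.Perm V :=
  hM.partner_involutive.toPerm

lemma IsPerfectMatching.sign_toPerm [Fintype V] [DecidableEq V] (hM : M.IsPerfectMatching) :
    Equiv.Perm.sign hM.toPerm = (-1) ^ (Fintype.card V / 2) := by
  have hsq : hM.toPerm ^ 2 = 1 := Equiv.ext hM.partner_involutive
  have hfix : Fintype.card (Function.fixedPoints hM.toPerm) = 0 :=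
    Fintype.card_eq_zero_iff.mpr ⟨fun ⟨v, hv⟩ => hM.partner_ne v hv⟩
  rw [Equiv.Perm.sign_of_pow_two_eq_one hsq, hfix, Nat.sub_zero]

end Subgraph

lemma exists_isPerfectMatching_of_perm (σ : Equiv.Perm V) (s : Set V)
    (hσs : ∀ v, σ v ∈ s ↔ v ∉ s) (hadj : ∀ v ∈ s, G.Adj v (σ v)) :
    ∃ N : G.Subgraph, N.IsPerfectMatching ∧ ∀ v ∈ s, N.Adj v (σ v) := by
  let N : G.Subgraph :=
    { verts := Set.univ
      Adj := fun u v => (u ∈ s ∧ σ u = v) ∨ (v ∈ s ∧ σ v = u)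
      adj_sub := by
        rintro u v (⟨hu, rfl⟩ | ⟨hv, rfl⟩)
        exacts [hadj u hu, (hadj v hv).symm]
      edge_vert := fun _ => Set.mem_univ _
      symm := ⟨fun _ _ => Or.symm⟩ }
  refine ⟨N, Subgraph.isPerfectMatching_iff.mpr fun v => ?_, fun v hv => Or.inl ⟨hv, rfl⟩⟩
  by_cases hv : v ∈ s
  · refine ⟨σ v, Or.inl ⟨hv, rfl⟩, ?_⟩
    rintro w (⟨-, rfl⟩ | ⟨hw, rfl⟩)
    exacts [rfl, absurd hw ((hσs w).mp hv)]
  · have hinv : σ⁻¹ v ∈ s := by simpa using (hσs (σ⁻¹ v)).not.mp (by simpa using hv)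
    refine ⟨σ⁻¹ v, Or.inr ⟨hinv, by simp⟩, ?_⟩
    rintro w (⟨hw, -⟩ | ⟨-, rfl⟩)
    exacts [absurd hw hv, by simp]

lemma Subgraph.adj_apply_of_unique_isPerfectMatching (C : G.Coloring (Fin 2))
    (huniq : ∀ N : G.Subgraph, N.IsPerfectMatching → N = M) (σ : Equiv.Perm V)
    (hσ : ∀ v, G.Adj v (σ v)) (v : V) : M.Adj v (σ v) := by
  have hσs : ∀ u, σ u ∈ {w | C w = C v} ↔ u ∉ {w | C w = C v} := by
    intro u
    have := C.valid (hσ u)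
    simp only [Set.mem_ofPred_eq]
    omega
  obtain ⟨N, hN, hNσ⟩ := exists_isPerfectMatching_of_perm σ _ hσs fun u _ => hσ u
  exact huniq N hN ▸ hNσ v rfl

end SimpleGraph

theorem Matrix.det_eq_sign_smul_prod_of_unique_isPerfectMatching {R : Type*} [Fintype V]
    [DecidableEq V] [CommRing R] {G : SimpleGraph V} (A : Matrix V V R)
    (hA : ∀ u v, A u v ≠ 0 → G.Adj u v) (hbip : G.Colorable 2) {M : G.Subgraph}
    (hM : M.IsPerfectMatching) (huniq : ∀ N : G.Subgraph, N.IsPerfectMatching → N = M) :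
    A.det = Equiv.Perm.sign hM.toPerm • ∏ v, A (hM.toPerm v) v := by
  obtain ⟨C⟩ := hbip
  rw [Matrix.det_apply]
  refine Finset.sum_eq_single_of_mem _ (Finset.mem_univ _) fun σ _ hσ => ?_
  suffices ∃ v, A (σ v) v = 0 by
    obtain ⟨v, hv⟩ := this
    rw [Finset.prod_eq_zero (f := fun i => A (σ i) i) (Finset.mem_univ v) hv, smul_zero]
  by_contra! hne
  refine hσ (Equiv.ext fun v => (hM.partner_eq_of_adj ?_).symm)
  exact Subgraph.adj_apply_of_unique_isPerfectMatching C huniq σ (fun u => (hA _ _ (hne u)).symm) v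

section Halpha

variable {X : MixedGraph V} {α : ℂ}

lemma underlying_adj_of_Halpha_ne_zero {u v : V} (h : Halpha X α u v ≠ 0) :
    X.underlying.Adj u v := by
  by_contra hadj
  simp only [MixedGraph.underlying, not_or] at hadj
  simp [Halpha, hadj.1, hadj.2.1, hadj.2.2] at h

lemma Halpha_mul_Halpha_swap (hα : ‖α‖ = 1) {u v : V} (h : X.underlying.Adj u v) :
    Halpha X α u v * Halpha X α v u = 1 := by
  have hconj : α * (starRingEnd ℂ) α = 1 := by
    rw [Complex.mul_conj, Complex.normSq_eq_norm_sq, hα]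
    norm_num
  rcases h with hd | ha | ha
  · simp [Halpha, hd, X.digon_symm u v hd]
  · have h1 : ¬ X.digon u v := fun hd => (X.digon_arc u v hd).1 ha
    have h2 : ¬ X.digon v u := fun hd => (X.digon_arc v u hd).2 ha
    simp [Halpha, h1, h2, ha, X.arc_asymm u v ha, hconj]
  · have h1 : ¬ X.digon u v := fun hd => (X.digon_arc u v hd).2 ha
    have h2 : ¬ X.digon v u := fun hd => (X.digon_arc v u hd).1 ha
    simp [Halpha, h1, h2, ha, X.arc_asymm v u ha, mul_comm, hconj]

lemma prod_Halpha_toPerm [Fintype V] (hα : ‖α‖ = 1) {M : X.underlying.Subgraph}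
    (hM : M.IsPerfectMatching) : ∏ v, Halpha X α (hM.toPerm v) v = 1 := by
  refine Finset.prod_ninvolution hM.partner (fun v => ?_) (fun v _ => hM.partner_ne v)
    (fun _ => Finset.mem_univ _) hM.partner_involutive
  have hv : hM.toPerm (hM.partner v) = v := hM.partner_involutive v
  rw [hv]
  exact Halpha_mul_Halpha_swap hα (hM.adj_partner v).adj_sub.symm

end Halpha

/-- For a bipartite mixed graph with a unique perfect matching on n vertices,
det(H_α) = (−1)^{n/2}. -/
theorem stmt7 {V : Type*} [Fintype V] [DecidableEq V]
    (X : MixedGraph V) (α : ℂ) (hα : ‖α‖ = 1)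
    (hbip : X.underlying.Colorable 2)
    (M : X.underlying.Subgraph) (hM : M.IsPerfectMatching)
    (huniq : ∀ N : X.underlying.Subgraph, N.IsPerfectMatching → N = M) :
    (Halpha X α).det = (-1 : ℂ) ^ (Fintype.card V / 2) := by
  rw [Matrix.det_eq_sign_smul_prod_of_unique_isPerfectMatching _
      (fun _ _ => underlying_adj_of_Halpha_ne_zero) hbip hM huniq,
    hM.sign_toPerm, prod_Halpha_toPerm hα hM, Units.smul_def, zsmul_eq_mul, mul_one]
  push_cast
  rfl
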